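/- The space of derivations of the Lie-Yamaguti algebra structure 𝓛₂₉ on ℂ⁴, given by [e₁,e₂]=e₃, [e₁,e₃]=e₄, [e₂,e₃]=e₄, [e₁,e₃,e₂]=e₄, [e₂,e₃,e₁]=e₄, is a 2-dimensional linear subspace of the endomorphisms of ℂ⁴ (equivalently, the GL₄(ℂ)-orbit of 𝓛₂₉ has dimension 16 − 2 = 14). -/
import Mathlib


open Filter Matrix Topology

/-- ℂ⁴ -/
abbrev V4 : Type := Fin 4 → ℂ

/-- GL₄(ℂ) -/
abbrev GL4 := Matrix.GeneralLinearGroup (Fin 4) ℂ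

/-- structure constants of a bilinear map on ℂ⁴: `μ i j` is the value on `(eᵢ, eⱼ)`. -/
abbrev Bil4 := Fin 4 → Fin 4 → V4

/-- structure constants of a trilinear map on ℂ⁴. -/
abbrev Tril4 := Fin 4 → Fin 4 → Fin 4 → V4

/-- standard basis vectors -/
noncomputable def e4 (k : Fin 4) : V4 := Pi.single k (1 : ℂ)

/-- action of `g ∈ GL₄(ℂ)` on a bilinear map: `(g·μ)(x,y) = g μ(g⁻¹x, g⁻¹y)`,
in structure constants. -/
noncomputable def actBil (g : GL4) (μ : Bil4) : Bil4 := fun i j =>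
  (g : Matrix (Fin 4) (Fin 4) ℂ).mulVec
    (∑ p, ∑ q,
      (((g⁻¹ : GL4) : Matrix (Fin 4) (Fin 4) ℂ) p i *
       ((g⁻¹ : GL4) : Matrix (Fin 4) (Fin 4) ℂ) q j) • μ p q)

/-- action of `g ∈ GL₄(ℂ)` on a trilinear map:
`(g·τ)(x,y,z) = g τ(g⁻¹x, g⁻¹y, g⁻¹z)`, in structure constants. -/
noncomputable def actTril (g : GL4) (τ : Tril4) : Tril4 := fun i j k =>
  (g : Matrix (Fin 4) (Fin 4) ℂ).mulVec
    (∑ p, ∑ q, ∑ r,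
      (((g⁻¹ : GL4) : Matrix (Fin 4) (Fin 4) ℂ) p i *
       ((g⁻¹ : GL4) : Matrix (Fin 4) (Fin 4) ℂ) q j *
       ((g⁻¹ : GL4) : Matrix (Fin 4) (Fin 4) ℂ) r k) • τ p q r)

/-- the bilinear map on ℂ⁴ with structure constants `μ`. -/
noncomputable def bilMap (μ : Bil4) (x y : V4) : V4 :=
  ∑ i, ∑ j, (x i * y j) • μ i j

/-- the trilinear map on ℂ⁴ with structure constants `τ`. -/
noncomputable def trilMap (τ : Tril4) (x y z : V4) : V4 :=
  ∑ i, ∑ j, ∑ k, (x i * y j * z k) • τ i j k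

/-- `D` is a derivation of the pair `(μ,τ)`. -/
def IsDerivation (μ : Bil4) (τ : Tril4) (D : V4 →ₗ[ℂ] V4) : Prop :=
  (∀ x y : V4, D (bilMap μ x y) = bilMap μ (D x) y + bilMap μ x (D y)) ∧
  (∀ x y z : V4, D (trilMap τ x y z) =
    trilMap τ (D x) y z + trilMap τ x (D y) z + trilMap τ x y (D z))

noncomputable def μL29 : Bil4 := fun i j =>
  if i = (0 : Fin 4) ∧ j = (1 : Fin 4) then e4 2
  else if i = (1 : Fin 4) ∧ j = (0 : Fin 4) then -(e4 2)
  else if i = (0 : Fin 4) ∧ j = (2 : Fin 4) then e4 3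
  else if i = (2 : Fin 4) ∧ j = (0 : Fin 4) then -(e4 3)
  else if i = (1 : Fin 4) ∧ j = (2 : Fin 4) then e4 3
  else if i = (2 : Fin 4) ∧ j = (1 : Fin 4) then -(e4 3)
  else 0

noncomputable def τL29 : Tril4 := fun i j k =>
  if i = (0 : Fin 4) ∧ j = (2 : Fin 4) ∧ k = (1 : Fin 4) then e4 3
  else if i = (2 : Fin 4) ∧ j = (0 : Fin 4) ∧ k = (1 : Fin 4) then -(e4 3)
  else if i = (1 : Fin 4) ∧ j = (2 : Fin 4) ∧ k = (0 : Fin 4) then e4 3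
  else if i = (2 : Fin 4) ∧ j = (1 : Fin 4) ∧ k = (0 : Fin 4) then -(e4 3)
  else 0

-- helpers appended after prefix
noncomputable def D1 : V4 →ₗ[ℂ] V4 := (LinearMap.proj (0:Fin 4) : V4 →ₗ[ℂ] ℂ).smulRight (e4 3)
noncomputable def D2 : V4 →ₗ[ℂ] V4 := (LinearMap.proj (1:Fin 4) : V4 →ₗ[ℂ] ℂ).smulRight (e4 3)

@[simp] lemma D1_apply (x : V4) : D1 x = x 0 • e4 3 := rfl
@[simp] lemma D2_apply (x : V4) : D2 x = x 1 • e4 3 := rfl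

lemma bilMap_e4 (μ : Bil4) (i j : Fin 4) : bilMap μ (e4 i) (e4 j) = μ i j := by
  simp [bilMap, e4, Pi.single_apply, Finset.sum_ite_eq, ite_smul]

lemma trilMap_e4 (τ : Tril4) (i j k : Fin 4) : trilMap τ (e4 i) (e4 j) (e4 k) = τ i j k := by
  simp [trilMap, e4, Pi.single_apply, Finset.sum_ite_eq, ite_smul, mul_ite]
@[simp] lemma mu_row3 (j : Fin 4) : μL29 3 j = 0 := by fin_cases j <;> simp [μL29]
@[simp] lemma mu_col3 (i : Fin 4) : μL29 i 3 = 0 := by fin_cases i <;> simp [μL29]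
@[simp] lemma mu_comp0 (i j : Fin 4) : μL29 i j 0 = 0 := by
  fin_cases i <;> fin_cases j <;> simp [μL29, e4]
@[simp] lemma mu_comp1 (i j : Fin 4) : μL29 i j 1 = 0 := by
  fin_cases i <;> fin_cases j <;> simp [μL29, e4]
@[simp] lemma tau_slot1 (j k : Fin 4) : τL29 3 j k = 0 := by
  fin_cases j <;> fin_cases k <;> simp [τL29]
@[simp] lemma tau_slot2 (i k : Fin 4) : τL29 i 3 k = 0 := by
  fin_cases i <;> fin_cases k <;> simp [τL29]
@[simp] lemma tau_slot3 (i j : Fin 4) : τL29 i j 3 = 0 := by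
  fin_cases i <;> fin_cases j <;> simp [τL29]
@[simp] lemma tau_comp0 (i j k : Fin 4) : τL29 i j k 0 = 0 := by
  fin_cases i <;> fin_cases j <;> fin_cases k <;> simp [τL29, e4]
@[simp] lemma tau_comp1 (i j k : Fin 4) : τL29 i j k 1 = 0 := by
  fin_cases i <;> fin_cases j <;> fin_cases k <;> simp [τL29, e4]

lemma bil_left3 (c : ℂ) (y : V4) : bilMap μL29 (c • e4 3) y = 0 := by
  simp [bilMap, e4, Fin.sum_univ_four, Pi.single_apply]
lemma bil_right3 (c : ℂ) (x : V4) : bilMap μL29 x (c • e4 3) = 0 := by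
  simp [bilMap, e4, Fin.sum_univ_four, Pi.single_apply]
lemma tril_13 (c : ℂ) (y z : V4) : trilMap τL29 (c • e4 3) y z = 0 := by
  simp [trilMap, e4, Fin.sum_univ_four, Pi.single_apply]
lemma tril_23 (c : ℂ) (x z : V4) : trilMap τL29 x (c • e4 3) z = 0 := by
  simp [trilMap, e4, Fin.sum_univ_four, Pi.single_apply]
lemma tril_33 (c : ℂ) (x y : V4) : trilMap τL29 x y (c • e4 3) = 0 := by
  simp [trilMap, e4, Fin.sum_univ_four, Pi.single_apply]

lemma bil_comp0 (x y : V4) : bilMap μL29 x y 0 = 0 := by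
  simp [bilMap, Finset.sum_apply, Pi.smul_apply]
lemma bil_comp1 (x y : V4) : bilMap μL29 x y 1 = 0 := by
  simp [bilMap, Finset.sum_apply, Pi.smul_apply]
lemma tril_comp0 (x y z : V4) : trilMap τL29 x y z 0 = 0 := by
  simp [trilMap, Finset.sum_apply, Pi.smul_apply]
lemma tril_comp1 (x y z : V4) : trilMap τL29 x y z 1 = 0 := by
  simp [trilMap, Finset.sum_apply, Pi.smul_apply]

lemma comb_apply (a b : ℂ) (x : V4) : (a • D1 + b • D2) x = (a * x 0 + b * x 1) • e4 3 := by
  simp [add_smul, smul_smul]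

lemma comb_isDer (a b : ℂ) : IsDerivation μL29 τL29 (a • D1 + b • D2) := by
  constructor
  · intro x y
    rw [comb_apply, comb_apply, comb_apply, bil_comp0, bil_comp1, bil_left3, bil_right3]
    simp
  · intro x y z
    rw [comb_apply, comb_apply, comb_apply, comb_apply, tril_comp0, tril_comp1,
      tril_13, tril_23, tril_33]
    simp
lemma e43_ne : (e4 3 : V4) ≠ 0 := by
  intro h
  have := congrFun h 3
  simp [e4] at this

lemma li12 : LinearIndependent ℂ ![D1, D2] := by
  rw [linearIndependent_fin2]
  constructor
  · intro h
    have := congrFun (LinearMap.congr_fun (show D2 = 0 by simpa using h) (e4 1)) 3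
    simp [e4] at this
  · intro a h
    have := congrFun (LinearMap.congr_fun h (e4 0)) 3
    simp [e4] at this

set_option maxHeartbeats 2000000 in
lemma der_mem (D : V4 →ₗ[ℂ] V4) (h : IsDerivation μL29 τL29 D) :
    ∃ c d : ℂ, c • D1 + d • D2 = D := by
  have E : ∀ i j : Fin 4, D (μL29 i j) =
      bilMap μL29 (D (e4 i)) (e4 j) + bilMap μL29 (e4 i) (D (e4 j)) := fun i j => by
    rw [← bilMap_e4 μL29 i j]; exact h.1 _ _
  have T : ∀ i j k : Fin 4, D (τL29 i j k) =
      trilMap τL29 (D (e4 i)) (e4 j) (e4 k) + trilMap τL29 (e4 i) (D (e4 j)) (e4 k)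
        + trilMap τL29 (e4 i) (e4 j) (D (e4 k)) := fun i j k => by
    rw [← trilMap_e4 τL29 i j k]; exact h.2 _ _ _
  have b01_0 := congrFun (E 0 1) 0
  have b01_1 := congrFun (E 0 1) 1
  have b01_2 := congrFun (E 0 1) 2
  have b01_3 := congrFun (E 0 1) 3
  have b02_0 := congrFun (E 0 2) 0
  have b02_1 := congrFun (E 0 2) 1
  have b02_2 := congrFun (E 0 2) 2
  have b02_3 := congrFun (E 0 2) 3
  have b12_3 := congrFun (E 1 2) 3
  have t021 := congrFun (T 0 2 1) 3
  have t011 := congrFun (T 0 1 1) 3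
  have t010 := congrFun (T 0 1 0) 3
  have t020 := congrFun (T 0 2 0) 3
  have t121 := congrFun (T 1 2 1) 3
  simp [bilMap, trilMap, Fin.sum_univ_four, e4, μL29, τL29, Pi.single_apply] at b01_0
  simp [bilMap, trilMap, Fin.sum_univ_four, e4, μL29, τL29, Pi.single_apply] at b01_1
  simp [bilMap, trilMap, Fin.sum_univ_four, e4, μL29, τL29, Pi.single_apply] at b01_2
  simp [bilMap, trilMap, Fin.sum_univ_four, e4, μL29, τL29, Pi.single_apply] at b01_3
  simp [bilMap, trilMap, Fin.sum_univ_four, e4, μL29, τL29, Pi.single_apply] at b02_0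
  simp [bilMap, trilMap, Fin.sum_univ_four, e4, μL29, τL29, Pi.single_apply] at b02_1
  simp [bilMap, trilMap, Fin.sum_univ_four, e4, μL29, τL29, Pi.single_apply] at b02_2
  simp [bilMap, trilMap, Fin.sum_univ_four, e4, μL29, τL29, Pi.single_apply] at b02_3
  simp [bilMap, trilMap, Fin.sum_univ_four, e4, μL29, τL29, Pi.single_apply] at b12_3
  simp [bilMap, trilMap, Fin.sum_univ_four, e4, μL29, τL29, Pi.single_apply] at t021
  simp [bilMap, trilMap, Fin.sum_univ_four, e4, μL29, τL29, Pi.single_apply] at t011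
  simp [bilMap, trilMap, Fin.sum_univ_four, e4, μL29, τL29, Pi.single_apply] at t010
  simp [bilMap, trilMap, Fin.sum_univ_four, e4, μL29, τL29, Pi.single_apply] at t020
  simp [bilMap, trilMap, Fin.sum_univ_four, e4, μL29, τL29, Pi.single_apply] at t121
  have A00 : D (Pi.single (0:Fin 4) (1:ℂ)) 0 = 0 := by linear_combination b12_3 - t021 - t121/2
  have A10 : D (Pi.single (0:Fin 4) (1:ℂ)) 1 = 0 := by linear_combination -t020/2
  have A20 : D (Pi.single (0:Fin 4) (1:ℂ)) 2 = 0 := by linear_combination t010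
  have A01 : D (Pi.single (1:Fin 4) (1:ℂ)) 0 = 0 := by linear_combination -t121/2
  have A11 : D (Pi.single (1:Fin 4) (1:ℂ)) 1 = 0 := by linear_combination b02_3 - t021 - t020/2
  have A21 : D (Pi.single (1:Fin 4) (1:ℂ)) 2 = 0 := by linear_combination -t011
  have A02 : D (Pi.single (2:Fin 4) (1:ℂ)) 0 = 0 := by linear_combination b01_0
  have A12 : D (Pi.single (2:Fin 4) (1:ℂ)) 1 = 0 := by linear_combination b01_1
  have A22 : D (Pi.single (2:Fin 4) (1:ℂ)) 2 = 0 := by linear_combination b01_2 + A00 + A11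
  have A32 : D (Pi.single (2:Fin 4) (1:ℂ)) 3 = 0 := by linear_combination b01_3 - A20 + A21
  have A03 : D (Pi.single (3:Fin 4) (1:ℂ)) 0 = 0 := by linear_combination b02_0
  have A13 : D (Pi.single (3:Fin 4) (1:ℂ)) 1 = 0 := by linear_combination b02_1
  have A23 : D (Pi.single (3:Fin 4) (1:ℂ)) 2 = 0 := by linear_combination b02_2 + A12
  have A33 : D (Pi.single (3:Fin 4) (1:ℂ)) 3 = 0 := by linear_combination b02_3 + A00 + A10 + A22
  refine ⟨D (e4 0) 3, D (e4 1) 3, ?_⟩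
  apply Module.Basis.ext (Pi.basisFun ℂ (Fin 4))
  intro i
  funext p
  fin_cases i <;> fin_cases p <;>
    simp [e4, Pi.single_apply, A00, A10, A20, A01, A11, A21, A02, A12, A22, A32, A03, A13, A23, A33]
/-- the derivations of 𝓛₂₉ form a 2-dimensional subspace of End(ℂ⁴). -/
theorem stmt9 : ∃ S : Submodule ℂ (V4 →ₗ[ℂ] V4),
    ((S : Set (V4 →ₗ[ℂ] V4)) = {D | IsDerivation μL29 τL29 D}) ∧
    Module.finrank ℂ S = 2 := by
  refine ⟨Submodule.span ℂ {D1, D2}, ?_, ?_⟩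
  · ext D
    simp only [SetLike.mem_coe, Submodule.mem_span_pair, Set.mem_setOf_eq]
    constructor
    · rintro ⟨a, b, rfl⟩; exact comb_isDer a b
    · exact der_mem D
  · have hr : ({D1, D2} : Set (V4 →ₗ[ℂ] V4)) = Set.range ![D1, D2] := by
      simp [Matrix.range_cons, Matrix.range_empty, Set.pair_comm]
    rw [hr, finrank_span_eq_card li12]
    simp
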